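/- arXiv:1202.2390 — 2 statements merged into one kernel-verified Lean document; each statement's English description precedes it below -/
import Mathlib

section
/- Suppose Φ has a 𝒟-pullback attractor 𝒜 ∈ 𝒟. Then for every ω₁ ∈ Ω₁ and ω₂ ∈ Ω₂, 𝒜(ω₁,ω₂) = { ψ(0,ω₁,ω₂) : ψ is a 𝒟-complete orbit of Φ }. -/
open MeasureTheory Filter Set Topology
open scoped ENNReal

namespace RDS

/-- A group of transformations of `α` parametrized by `ℝ`. -/
def IsGroupAction {α : Type*} (θ : ℝ → α → α) : Prop :=
  (∀ a, θ 0 a = a) ∧ ∀ s t : ℝ, ∀ a, θ (s + t) a = θ t (θ s a)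

variable {Ω₁ Ω₂ X : Type*} [MetricSpace X] [MeasurableSpace X] [MeasurableSpace Ω₂]

/-- A continuous cocycle on `X` over the parametric dynamical systems
`(Ω₁, θ₁)` and `(Ω₂, ℱ₂, P, θ₂)` (Definition 2.1). -/
structure IsCocycle (θ₁ : ℝ → Ω₁ → Ω₁) (θ₂ : ℝ → Ω₂ → Ω₂)
    (Φ : ℝ → Ω₁ → Ω₂ → X → X) : Prop where
  measurable : ∀ ω₁ : Ω₁,
    Measurable fun p : {t : ℝ // 0 ≤ t} × Ω₂ × X => Φ p.1.1 ω₁ p.2.1 p.2.2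
  map_zero : ∀ (ω₁ : Ω₁) (ω₂ : Ω₂) (x : X), Φ 0 ω₁ ω₂ x = x
  cocycle : ∀ t τ : ℝ, 0 ≤ t → 0 ≤ τ → ∀ (ω₁ : Ω₁) (ω₂ : Ω₂) (x : X),
    Φ (t + τ) ω₁ ω₂ x = Φ t (θ₁ τ ω₁) (θ₂ τ ω₂) (Φ τ ω₁ ω₂ x)
  continuous : ∀ t : ℝ, 0 ≤ t → ∀ (ω₁ : Ω₁) (ω₂ : Ω₂),
    Continuous fun x : X => Φ t ω₁ ω₂ x

/-- A complete orbit of the cocycle `Φ` (Definition 2.9). -/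
def IsCompleteOrbit (θ₁ : ℝ → Ω₁ → Ω₁) (θ₂ : ℝ → Ω₂ → Ω₂)
    (Φ : ℝ → Ω₁ → Ω₂ → X → X) (ψ : ℝ → Ω₁ → Ω₂ → X) : Prop :=
  ∀ t τ : ℝ, 0 ≤ t → ∀ (ω₁ : Ω₁) (ω₂ : Ω₂),
    Φ t (θ₁ τ ω₁) (θ₂ τ ω₂) (ψ τ ω₁ ω₂) = ψ (t + τ) ω₁ ω₂

/-- A `𝒟`-complete orbit of `Φ`. -/
def IsDCompleteOrbit (θ₁ : ℝ → Ω₁ → Ω₁) (θ₂ : ℝ → Ω₂ → Ω₂)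
    (Φ : ℝ → Ω₁ → Ω₂ → X → X) (𝒟 : Set (Ω₁ → Ω₂ → Set X))
    (ψ : ℝ → Ω₁ → Ω₂ → X) : Prop :=
  IsCompleteOrbit θ₁ θ₂ Φ ψ ∧
    ∃ D ∈ 𝒟, ∀ (t : ℝ) (ω₁ : Ω₁) (ω₂ : Ω₂), ψ t ω₁ ω₂ ∈ D (θ₁ t ω₁) (θ₂ t ω₂)

/-- Positive invariance of a family under `Φ`. -/
def PositivelyInvariant (θ₁ : ℝ → Ω₁ → Ω₁) (θ₂ : ℝ → Ω₂ → Ω₂)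
    (Φ : ℝ → Ω₁ → Ω₂ → X → X) (B : Ω₁ → Ω₂ → Set X) : Prop :=
  ∀ t : ℝ, 0 ≤ t → ∀ (ω₁ : Ω₁) (ω₂ : Ω₂),
    Φ t ω₁ ω₂ '' B ω₁ ω₂ ⊆ B (θ₁ t ω₁) (θ₂ t ω₂)

/-- Invariance of a family under `Φ`. -/
def Invariant (θ₁ : ℝ → Ω₁ → Ω₁) (θ₂ : ℝ → Ω₂ → Ω₂)
    (Φ : ℝ → Ω₁ → Ω₂ → X → X) (B : Ω₁ → Ω₂ → Set X) : Prop :=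
  ∀ t : ℝ, 0 ≤ t → ∀ (ω₁ : Ω₁) (ω₂ : Ω₂),
    Φ t ω₁ ω₂ '' B ω₁ ω₂ = B (θ₁ t ω₁) (θ₂ t ω₂)

/-- Quasi-invariance of a family under `Φ`. -/
def QuasiInvariant (θ₁ : ℝ → Ω₁ → Ω₁) (θ₂ : ℝ → Ω₂ → Ω₂)
    (Φ : ℝ → Ω₁ → Ω₂ → X → X) (B : Ω₁ → Ω₂ → Set X) : Prop :=
  ∀ y : Ω₁ → Ω₂ → X, (∀ (ω₁ : Ω₁) (ω₂ : Ω₂), y ω₁ ω₂ ∈ B ω₁ ω₂) →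
    ∃ ψ : ℝ → Ω₁ → Ω₂ → X, IsCompleteOrbit θ₁ θ₂ Φ ψ ∧
      (∀ (ω₁ : Ω₁) (ω₂ : Ω₂), ψ 0 ω₁ ω₂ = y ω₁ ω₂) ∧
      ∀ (t : ℝ) (ω₁ : Ω₁) (ω₂ : Ω₂), ψ t ω₁ ω₂ ∈ B (θ₁ t ω₁) (θ₂ t ω₂)

/-- The Ω-limit set of a family `B` (Definition 2.13). -/
def omegaLimit (θ₁ : ℝ → Ω₁ → Ω₁) (θ₂ : ℝ → Ω₂ → Ω₂)
    (Φ : ℝ → Ω₁ → Ω₂ → X → X) (B : Ω₁ → Ω₂ → Set X) (ω₁ : Ω₁) (ω₂ : Ω₂) : Set X :=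
  ⋂ τ ∈ Ici (0 : ℝ), closure (⋃ t ∈ Ici τ,
    Φ t (θ₁ (-t) ω₁) (θ₂ (-t) ω₂) '' B (θ₁ (-t) ω₁) (θ₂ (-t) ω₂))

/-- `𝒟` is a collection of families of nonempty subsets of `X`. -/
def FamiliesOfNonemptySets (𝒟 : Set (Ω₁ → Ω₂ → Set X)) : Prop :=
  ∀ D ∈ 𝒟, ∀ (ω₁ : Ω₁) (ω₂ : Ω₂), (D ω₁ ω₂).Nonempty

/-- Neighborhood closedness of the collection `𝒟` (Definition 2.5). -/
def NeighborhoodClosed (𝒟 : Set (Ω₁ → Ω₂ → Set X)) : Prop :=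
  ∀ D ∈ 𝒟, ∃ ε : ℝ, 0 < ε ∧ ∀ B : Ω₁ → Ω₂ → Set X,
    (∀ (ω₁ : Ω₁) (ω₂ : Ω₂), (B ω₁ ω₂).Nonempty ∧
      B ω₁ ω₂ ⊆ Metric.thickening ε (D ω₁ ω₂)) → B ∈ 𝒟

/-- Inclusion closedness of the collection `𝒟`. -/
def InclusionClosed (𝒟 : Set (Ω₁ → Ω₂ → Set X)) : Prop :=
  ∀ D ∈ 𝒟, ∀ B : Ω₁ → Ω₂ → Set X,
    (∀ (ω₁ : Ω₁) (ω₂ : Ω₂), (B ω₁ ω₂).Nonempty ∧ B ω₁ ω₂ ⊆ D ω₁ ω₂) → B ∈ 𝒟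

/-- `𝒟`-pullback asymptotic compactness of `Φ` (Definition 2.16). -/
def AsymptoticallyCompact (θ₁ : ℝ → Ω₁ → Ω₁) (θ₂ : ℝ → Ω₂ → Ω₂)
    (Φ : ℝ → Ω₁ → Ω₂ → X → X) (𝒟 : Set (Ω₁ → Ω₂ → Set X)) : Prop :=
  ∀ (ω₁ : Ω₁) (ω₂ : Ω₂), ∀ B ∈ 𝒟, ∀ (t : ℕ → ℝ) (x : ℕ → X),
    Tendsto t atTop atTop →
    (∀ n, x n ∈ B (θ₁ (-t n) ω₁) (θ₂ (-t n) ω₂)) →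
    ∃ (φ : ℕ → ℕ) (y : X), StrictMono φ ∧
      Tendsto (fun n => Φ (t (φ n)) (θ₁ (-t (φ n)) ω₁) (θ₂ (-t (φ n)) ω₂) (x (φ n)))
        atTop (𝓝 y)

/-- The Hausdorff semi-metric `d(C,B) = sup_{x ∈ C} inf_{b ∈ B} d(x,b)`,
valued in `ℝ≥0∞`. -/
noncomputable def hausSemidist (C B : Set X) : ℝ≥0∞ :=
  ⨆ x ∈ C, EMetric.infEdist x B

/-- The family `A` pullback attracts the family `B` under `Φ`. -/
def Attracts (θ₁ : ℝ → Ω₁ → Ω₁) (θ₂ : ℝ → Ω₂ → Ω₂)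
    (Φ : ℝ → Ω₁ → Ω₂ → X → X) (B A : Ω₁ → Ω₂ → Set X) : Prop :=
  ∀ (ω₁ : Ω₁) (ω₂ : Ω₂),
    Tendsto (fun t : ℝ => hausSemidist
        (Φ t (θ₁ (-t) ω₁) (θ₂ (-t) ω₂) '' B (θ₁ (-t) ω₁) (θ₂ (-t) ω₂)) (A ω₁ ω₂))
      atTop (𝓝 0)

/-- A `𝒟`-pullback absorbing set for `Φ` (Definition 2.15). -/
def IsAbsorbingSet (θ₁ : ℝ → Ω₁ → Ω₁) (θ₂ : ℝ → Ω₂ → Ω₂)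
    (Φ : ℝ → Ω₁ → Ω₂ → X → X) (𝒟 : Set (Ω₁ → Ω₂ → Set X))
    (K : Ω₁ → Ω₂ → Set X) : Prop :=
  K ∈ 𝒟 ∧ ∀ (ω₁ : Ω₁) (ω₂ : Ω₂), ∀ B ∈ 𝒟, ∃ T : ℝ, 0 < T ∧ ∀ t : ℝ, T ≤ t →
    Φ t (θ₁ (-t) ω₁) (θ₂ (-t) ω₂) '' B (θ₁ (-t) ω₁) (θ₂ (-t) ω₂) ⊆ K ω₁ ω₂

/-- A closed measurable (w.r.t. the `P`-completion of `ℱ₂`) `𝒟`-pullback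
absorbing set for `Φ`. -/
def IsClosedMeasurableAbsorbingSet (θ₁ : ℝ → Ω₁ → Ω₁) (θ₂ : ℝ → Ω₂ → Ω₂)
    (Φ : ℝ → Ω₁ → Ω₂ → X → X) (P : Measure Ω₂) (𝒟 : Set (Ω₁ → Ω₂ → Set X))
    (K : Ω₁ → Ω₂ → Set X) : Prop :=
  IsAbsorbingSet θ₁ θ₂ Φ 𝒟 K ∧
    (∀ (ω₁ : Ω₁) (ω₂ : Ω₂), IsClosed (K ω₁ ω₂) ∧ (K ω₁ ω₂).Nonempty) ∧
    ∀ (ω₁ : Ω₁) (x : X), NullMeasurable (fun ω₂ => Metric.infDist x (K ω₁ ω₂)) P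

/-- A `𝒟`-pullback attractor for `Φ` (Definition 2.17). -/
structure IsPullbackAttractor (θ₁ : ℝ → Ω₁ → Ω₁) (θ₂ : ℝ → Ω₂ → Ω₂)
    (Φ : ℝ → Ω₁ → Ω₂ → X → X) (P : Measure Ω₂) (𝒟 : Set (Ω₁ → Ω₂ → Set X))
    (A : Ω₁ → Ω₂ → Set X) : Prop where
  mem : A ∈ 𝒟
  compact : ∀ (ω₁ : Ω₁) (ω₂ : Ω₂), IsCompact (A ω₁ ω₂)
  measurable : ∀ (ω₁ : Ω₁) (x : X),
    NullMeasurable (fun ω₂ => Metric.infDist x (A ω₁ ω₂)) P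
  invariant : Invariant θ₁ θ₂ Φ A
  attracts : ∀ B ∈ 𝒟, Attracts θ₁ θ₂ Φ B A

/-!
Invariance lets one pull any point of `𝒜 ω` back along its fibre without leaving `𝒜`, and pushing
these preimages forward gives a complete orbit through it inside `𝒜 ∈ 𝒟`. Conversely, a
`𝒟`-complete orbit reaches `ψ 0 ω` at time `t` from `ψ (-t) ω ∈ D (θ (-t) ω)`, so `ψ 0 ω` lies in
every pullback image `Φ t (θ (-t) ω) '' D (θ (-t) ω)`, whose semi-distance to the closed set
`𝒜 ω` tends to `0`.
-/

theorem IsGroupAction.map_map {α : Type*} {θ : ℝ → α → α} (h : IsGroupAction θ) (s t : ℝ)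
    (a : α) : θ t (θ s a) = θ (s + t) a :=
  (h.2 s t a).symm

theorem exists_seq_mem_of_subset_image {X : Type*} {S : ℕ → Set X} {f : ℕ → X → X}
    (hf : ∀ n, S n ⊆ f n '' S (n + 1)) {x : X} (hx : x ∈ S 0) :
    ∃ z : ℕ → X, z 0 = x ∧ ∀ n, z n ∈ S n ∧ f n (z (n + 1)) = z n := by
  have hpre : ∀ n, ∀ y ∈ S n, ∃ w ∈ S (n + 1), f n w = y := hf
  choose! pre hpre_mem hpre_eq using hpre
  let z : ℕ → X := fun n => Nat.rec x pre n
  have hz : ∀ n, z n ∈ S n := fun n => Nat.rec hx (fun n ih => hpre_mem n _ ih) n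
  exact ⟨z, rfl, fun n => ⟨hz n, hpre_eq n _ (hz n)⟩⟩

/-- Pull `x` back within `S` to the integer times `-n`, then push these preimages forward; by the
composition law the forward images of different preimages agree. -/
theorem exists_orbit_of_image_eq {X : Type*} {U : ℝ → ℝ → X → X} {S : ℝ → Set X}
    (hU : ∀ s r t, s ≤ r → r ≤ t → ∀ x, U t r (U r s x) = U t s x)
    (hS : ∀ s t, s ≤ t → U t s '' S s = S t) {x : X} (hx : x ∈ S 0) :
    ∃ g : ℝ → X, g 0 = x ∧ (∀ t, g t ∈ S t) ∧ ∀ s t, s ≤ t → U t s (g s) = g t := by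
  have hcast (n : ℕ) : -((n + 1 : ℕ) : ℝ) ≤ -(n : ℝ) := by push_cast; linarith
  obtain ⟨z, hz0, hz⟩ := exists_seq_mem_of_subset_image (S := fun n : ℕ => S (-n))
    (f := fun n => U (-n) (-(n + 1 : ℕ))) (fun n => (hS _ _ (hcast n)).ge) (x := x)
    (by simpa using hx)
  have hstep (t : ℝ) (n : ℕ) (hn : -(n : ℝ) ≤ t) :
      U t (-(n + 1 : ℕ)) (z (n + 1)) = U t (-n) (z n) := by
    rw [← (hz n).2, hU _ _ _ (hcast n) hn]
  have hmono (t : ℝ) (m n : ℕ) (hmn : m ≤ n) (hm : -(m : ℝ) ≤ t) :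
      U t (-n) (z n) = U t (-m) (z m) := by
    induction n, hmn using Nat.le_induction with
    | base => rfl
    | succ n hmn ih => rw [hstep t n ((neg_le_neg (Nat.cast_le.2 hmn)).trans hm), ih]
  have hconsist (t : ℝ) (m n : ℕ) (hm : -(m : ℝ) ≤ t) (hn : -(n : ℝ) ≤ t) :
      U t (-m) (z m) = U t (-n) (z n) := by
    rcases le_total m n with h | h
    exacts [(hmono t m n h hm).symm, hmono t n m h hn]
  choose N hN using fun t : ℝ => (exists_nat_ge (-t)).imp fun _ => neg_le.1
  refine ⟨fun t => U t (-N t) (z (N t)), ?_, fun t => ?_, fun s t hst => ?_⟩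
  · dsimp only
    rw [hconsist 0 (N 0) 1 (hN 0) (by norm_num), ← hz0, ← (hz 0).2]
    simp
  · exact hS _ _ (hN t) ▸ mem_image_of_mem _ (hz _).1
  · rw [hU _ _ _ (hN s) hst, hconsist t _ _ ((hN s).trans hst) (hN t)]

theorem infEDist_le_hausSemidist {X : Type*} [MetricSpace X] {C B : Set X} {x : X} (hx : x ∈ C) :
    Metric.infEDist x B ≤ hausSemidist C B :=
  le_iSup₂ (f := fun x (_ : x ∈ C) => Metric.infEDist x B) x hx

section Cocycle

variable {Ω₁ Ω₂ X : Type*} {θ₁ : ℝ → Ω₁ → Ω₁} {θ₂ : ℝ → Ω₂ → Ω₂} {Φ : ℝ → Ω₁ → Ω₂ → X → X}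

def process (θ₁ : ℝ → Ω₁ → Ω₁) (θ₂ : ℝ → Ω₂ → Ω₂) (Φ : ℝ → Ω₁ → Ω₂ → X → X) (ω₁ : Ω₁)
    (ω₂ : Ω₂) (t s : ℝ) : X → X :=
  Φ (t - s) (θ₁ s ω₁) (θ₂ s ω₂)

theorem process_comp (hθ₁ : IsGroupAction θ₁) (hθ₂ : IsGroupAction θ₂)
    (hΦ : ∀ t τ : ℝ, 0 ≤ t → 0 ≤ τ → ∀ (ω₁ : Ω₁) (ω₂ : Ω₂) (x : X),
      Φ (t + τ) ω₁ ω₂ x = Φ t (θ₁ τ ω₁) (θ₂ τ ω₂) (Φ τ ω₁ ω₂ x))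
    (ω₁ : Ω₁) (ω₂ : Ω₂) {s r t : ℝ} (hsr : s ≤ r) (hrt : r ≤ t) (x : X) :
    process θ₁ θ₂ Φ ω₁ ω₂ t r (process θ₁ θ₂ Φ ω₁ ω₂ r s x) = process θ₁ θ₂ Φ ω₁ ω₂ t s x := by
  have h := hΦ (t - r) (r - s) (sub_nonneg.2 hrt) (sub_nonneg.2 hsr) (θ₁ s ω₁) (θ₂ s ω₂) x
  rw [hθ₁.map_map, hθ₂.map_map, add_sub_cancel, sub_add_sub_cancel] at h
  exact h.symm

theorem Invariant.image_process_eq (hθ₁ : IsGroupAction θ₁) (hθ₂ : IsGroupAction θ₂)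
    {A : Ω₁ → Ω₂ → Set X} (hA : Invariant θ₁ θ₂ Φ A) (ω₁ : Ω₁) (ω₂ : Ω₂) {s t : ℝ} (hst : s ≤ t) :
    process θ₁ θ₂ Φ ω₁ ω₂ t s '' A (θ₁ s ω₁) (θ₂ s ω₂) = A (θ₁ t ω₁) (θ₂ t ω₂) := by
  rw [process, hA _ (sub_nonneg.2 hst), hθ₁.map_map, hθ₂.map_map, add_sub_cancel]

theorem Invariant.quasiInvariant (hθ₁ : IsGroupAction θ₁) (hθ₂ : IsGroupAction θ₂)
    (hΦ : ∀ t τ : ℝ, 0 ≤ t → 0 ≤ τ → ∀ (ω₁ : Ω₁) (ω₂ : Ω₂) (x : X),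
      Φ (t + τ) ω₁ ω₂ x = Φ t (θ₁ τ ω₁) (θ₂ τ ω₂) (Φ τ ω₁ ω₂ x))
    {A : Ω₁ → Ω₂ → Set X} (hA : Invariant θ₁ θ₂ Φ A) : QuasiInvariant θ₁ θ₂ Φ A := by
  intro y hy
  have hfibre (ω₁ : Ω₁) (ω₂ : Ω₂) := exists_orbit_of_image_eq (U := process θ₁ θ₂ Φ ω₁ ω₂)
    (S := fun t => A (θ₁ t ω₁) (θ₂ t ω₂)) (x := y ω₁ ω₂)
    (fun _ _ _ hsr hrt => process_comp hθ₁ hθ₂ hΦ ω₁ ω₂ hsr hrt)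
    (fun _ _ => hA.image_process_eq hθ₁ hθ₂ ω₁ ω₂) (by simpa [hθ₁.1, hθ₂.1] using hy ω₁ ω₂)
  choose ψ hψ0 hψA hψ using hfibre
  refine ⟨fun t ω₁ ω₂ => ψ ω₁ ω₂ t, fun t τ ht ω₁ ω₂ => ?_, hψ0, fun t ω₁ ω₂ => hψA ω₁ ω₂ t⟩
  simpa [process] using hψ ω₁ ω₂ τ (t + τ) (by linarith)

theorem IsCompleteOrbit.zero_mem_image {ψ : ℝ → Ω₁ → Ω₂ → X} (hψ : IsCompleteOrbit θ₁ θ₂ Φ ψ)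
    {D : Ω₁ → Ω₂ → Set X} {ω₁ : Ω₁} {ω₂ : Ω₂} (hD : ∀ t, ψ t ω₁ ω₂ ∈ D (θ₁ t ω₁) (θ₂ t ω₂))
    {t : ℝ} (ht : 0 ≤ t) :
    ψ 0 ω₁ ω₂ ∈ Φ t (θ₁ (-t) ω₁) (θ₂ (-t) ω₂) '' D (θ₁ (-t) ω₁) (θ₂ (-t) ω₂) :=
  ⟨ψ (-t) ω₁ ω₂, hD (-t), by simpa using hψ t (-t) ht ω₁ ω₂⟩

theorem Attracts.mem_of_eventually_mem_image [MetricSpace X] {B A : Ω₁ → Ω₂ → Set X}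
    (hBA : Attracts θ₁ θ₂ Φ B A) {ω₁ : Ω₁} {ω₂ : Ω₂} (hA : IsClosed (A ω₁ ω₂)) {x : X}
    (hx : ∀ᶠ t in atTop, x ∈ Φ t (θ₁ (-t) ω₁) (θ₂ (-t) ω₂) '' B (θ₁ (-t) ω₁) (θ₂ (-t) ω₂)) :
    x ∈ A ω₁ ω₂ := by
  have h : Metric.infEDist x (A ω₁ ω₂) ≤ 0 :=
    ge_of_tendsto (hBA ω₁ ω₂) (hx.mono fun _ => infEDist_le_hausSemidist)
  rw [← hA.closure_eq, Metric.mem_closure_iff_infEDist_zero]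
  exact nonpos_iff_eq_zero.1 h

end Cocycle

theorem exists_selection_eq {α β X : Type*} {S : α → β → Set X} (hS : ∀ a b, (S a b).Nonempty)
    {a : α} {b : β} {x : X} (hx : x ∈ S a b) :
    ∃ y : α → β → X, (∀ a b, y a b ∈ S a b) ∧ y a b = x := by
  classical
  refine ⟨fun a' b' => if a' = a ∧ b' = b then x else (hS a' b').some, fun a' b' => ?_,
    if_pos ⟨rfl, rfl⟩⟩
  dsimp only
  split_ifs with h
  · obtain ⟨rfl, rfl⟩ := h
    exact hx
  · exact (hS a' b').some_mem

theorem attractor_eq_completeOrbits_general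
    {Ω₁ Ω₂ X : Type*}
    [MetricSpace X]
    [MeasurableSpace X]
    [MeasurableSpace Ω₂] (P : Measure Ω₂)
    (θ₁ : ℝ → Ω₁ → Ω₁) (θ₂ : ℝ → Ω₂ → Ω₂)
    (hθ₁ : IsGroupAction θ₁) (hθ₂ : IsGroupAction θ₂)
    (Φ : ℝ → Ω₁ → Ω₂ → X → X)
    (hΦ : IsCocycle θ₁ θ₂ Φ)
    (𝒟 : Set (Ω₁ → Ω₂ → Set X))
    (h𝒟ne : FamiliesOfNonemptySets 𝒟)
    (A : Ω₁ → Ω₂ → Set X)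
    (hA : IsPullbackAttractor θ₁ θ₂ Φ P 𝒟 A) :
    ∀ (ω₁ : Ω₁) (ω₂ : Ω₂),
      A ω₁ ω₂ = {x : X | ∃ ψ : ℝ → Ω₁ → Ω₂ → X,
        IsDCompleteOrbit θ₁ θ₂ Φ 𝒟 ψ ∧ ψ 0 ω₁ ω₂ = x} := by
  intro ω₁ ω₂
  ext x
  constructor
  · intro hx
    obtain ⟨y, hyA, hyx⟩ := exists_selection_eq (h𝒟ne A hA.mem) hx
    obtain ⟨ψ, hψ, hψ0, hψA⟩ := hA.invariant.quasiInvariant hθ₁ hθ₂ hΦ.cocycle y hyA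
    exact ⟨ψ, ⟨hψ, A, hA.mem, hψA⟩, (hψ0 ω₁ ω₂).trans hyx⟩
  · rintro ⟨ψ, ⟨hψ, D, hD, hψD⟩, rfl⟩
    exact (hA.attracts D hD).mem_of_eventually_mem_image (hA.compact ω₁ ω₂).isClosed
      (eventually_atTop.2 ⟨0, fun _ ht => hψ.zero_mem_image (hψD · ω₁ ω₂) ht⟩)

theorem attractor_eq_completeOrbits
    {Ω₁ Ω₂ X : Type*} [Nonempty Ω₁]
    [MetricSpace X] [CompleteSpace X] [SecondCountableTopology X]
    [MeasurableSpace X] [BorelSpace X]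
    [MeasurableSpace Ω₂] (P : Measure Ω₂) [IsProbabilityMeasure P]
    (θ₁ : ℝ → Ω₁ → Ω₁) (θ₂ : ℝ → Ω₂ → Ω₂)
    (hθ₁ : IsGroupAction θ₁) (hθ₂ : IsGroupAction θ₂)
    (hθ₂meas : Measurable fun p : ℝ × Ω₂ => θ₂ p.1 p.2)
    (hθ₂pres : ∀ t : ℝ, MeasurePreserving (θ₂ t) P P)
    (Φ : ℝ → Ω₁ → Ω₂ → X → X)
    (hΦ : IsCocycle θ₁ θ₂ Φ)
    (𝒟 : Set (Ω₁ → Ω₂ → Set X))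
    (h𝒟ne : FamiliesOfNonemptySets 𝒟)
    (A : Ω₁ → Ω₂ → Set X)
    (hA : IsPullbackAttractor θ₁ θ₂ Φ P 𝒟 A) :
    ∀ (ω₁ : Ω₁) (ω₂ : Ω₂),
      A ω₁ ω₂ = {x : X | ∃ ψ : ℝ → Ω₁ → Ω₂ → X,
        IsDCompleteOrbit θ₁ θ₂ Φ 𝒟 ψ ∧ ψ 0 ω₁ ω₂ = x} :=
  attractor_eq_completeOrbits_general P θ₁ θ₂ hθ₁ hθ₂ Φ hΦ 𝒟 h𝒟ne A hA

end RDS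
end

section
/- Let 𝒟 be an inclusion-closed collection of families of nonempty subsets of X. Suppose K ∈ 𝒟 is a closed measurable 𝒟-pullback absorbing set for Φ and Φ is 𝒟-pullback asymptotically compact in X. Then Φ has a unique 𝒟-pullback attractor 𝒜 ∈ 𝒟, given for all ω₁ ∈ Ω₁ and ω₂ ∈ Ω₂ by 𝒜(ω₁,ω₂) = Ω(K,ω₁,ω₂) = ⋂_{τ≥0} cl(⋃_{t≥τ} Φ(t,θ₁(−t)ω₁,θ₂(−t)ω₂,K(θ₁(−t)ω₁,θ₂(−t)ω₂))). -/
open MeasureTheory Filter Set Topology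
open scoped ENNReal

/-!
The attractor is the Ω-limit set of the absorbing family `K`. Pulled-back points
`Φ(tₙ, θ₋ₜₙω) xₙ` with `tₙ → ∞` and `xₙ` in some `B ∈ 𝒟` have, by asymptotic compactness,
convergent subsequences, and absorption puts every such limit in `Ω(K, ω)`. This gives
nonemptiness, compactness, attraction of every `B ∈ 𝒟` and the inclusion
`Ω(K, θₜω) ⊆ Φ(t, ω) Ω(K, ω)`; the reverse inclusion is continuity of `Φ(t, ω)`.
For measurability, `d(x, Ω(K, ω))` is the limit of `d(x, Φ(n, θ₋ₙω) K(θ₋ₙω))`, and each of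
these is measurable in `ω₂` because a Castaing representation of `K` (a countable family of
measurable selections, dense in every fibre) turns it into a countable infimum.
Uniqueness: invariance makes the semi-distance from one attractor to another constant in time,
so two attractors attracting each other are contained in each other.
-/

open Metric

theorem Metric.infEDist_image_eq_iInf {α β : Type*} [TopologicalSpace α]
    [PseudoEMetricSpace β] {g : α → β} (hg : Continuous g) {S : Set α} {T : ℕ → α}
    (hTS : range T ⊆ S) (hST : S ⊆ closure (range T)) (y : β) :
    infEDist y (g '' S) = ⨅ k, edist y (g (T k)) := by
  have hrange : range (g ∘ T) ⊆ g '' S := range_comp g T ▸ image_mono hTS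
  have hclosure : g '' S ⊆ closure (range (g ∘ T)) :=
    (image_mono hST).trans (range_comp g T ▸ image_closure_subset_closure_image hg)
  have hinf : infEDist y (g '' S) = infEDist y (range (g ∘ T)) :=
    le_antisymm (infEDist_anti hrange)
      (infEDist_closure (x := y) (s := range (g ∘ T)) ▸ infEDist_anti hclosure)
  rw [hinf, ← iUnion_singleton_eq_range, infEDist_iUnion]
  simp only [infEDist_singleton, Function.comp_apply]

section CastaingRepresentation

variable {Ω Y : Type*} [MeasurableSpace Ω] [MetricSpace Y]

theorem exists_measurable_index_close_to_set {F : Ω → Set Y} (hFne : ∀ ω, (F ω).Nonempty)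
    {d : ℕ → Y} (hd : DenseRange d) (hF : ∀ i, Measurable fun ω => infDist (d i) (F ω))
    {u : Ω → ℕ} (hu : Measurable u) {ε δ : ℝ} (hε : 0 < ε) (hδ : 0 < δ) :
    ∃ v : Ω → ℕ, Measurable v ∧ ∀ ω, dist (d (v ω)) (d (u ω)) < infDist (d (u ω)) (F ω) + ε ∧
      infDist (d (v ω)) (F ω) < δ := by
  classical
  have hstep : ∀ ω, ∃ i, dist (d i) (d (u ω)) < infDist (d (u ω)) (F ω) + ε ∧
      infDist (d i) (F ω) < δ := by
    intro ω
    obtain ⟨y, hyF, hy⟩ := (infDist_lt_iff (hFne ω)).1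
      (lt_add_of_pos_right (infDist (d (u ω)) (F ω)) (half_pos hε))
    obtain ⟨i, hi⟩ := hd.exists_dist_lt y (lt_min (half_pos hε) hδ)
    have hiy : dist (d i) y < min (ε / 2) δ := by rwa [dist_comm]
    refine ⟨i, ?_, (infDist_le_dist_of_mem hyF).trans_lt (hiy.trans_le (min_le_right _ _))⟩
    linarith [dist_triangle (d i) y (d (u ω)), dist_comm y (d (u ω)), min_le_left (ε / 2) δ]
  have hjoint : Measurable fun p : Ω × ℕ => infDist (d p.2) (F p.1) :=
    measurable_from_prod_countable_left fun i => hF i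
  have hinf : Measurable fun ω => infDist (d (u ω)) (F ω) :=
    hjoint.comp (f := fun ω => (ω, u ω)) (measurable_id.prodMk hu)
  refine ⟨fun ω => Nat.find (hstep ω), measurable_find hstep fun i => ?_,
    fun ω => Nat.find_spec (hstep ω)⟩
  exact (measurableSet_lt ((measurable_from_nat (f := fun j => dist (d i) (d j))).comp hu)
    (hinf.add_const ε)).inter (measurableSet_lt (hF i) measurable_const)

theorem exists_measurable_selection_near [CompleteSpace Y] [MeasurableSpace Y] [BorelSpace Y]
    {F : Ω → Set Y} (hFcl : ∀ ω, IsClosed (F ω)) (hFne : ∀ ω, (F ω).Nonempty)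
    {d : ℕ → Y} (hd : DenseRange d) (hF : ∀ i, Measurable fun ω => infDist (d i) (F ω))
    (j : ℕ) {ε : ℝ} (hε : 0 < ε) :
    ∃ σ : Ω → Y, Measurable σ ∧ (∀ ω, σ ω ∈ F ω) ∧
      ∀ ω, dist (d j) (σ ω) ≤ 2 * (infDist (d j) (F ω) + 2 * ε) := by
  have : Nonempty Y := ⟨d 0⟩
  have hη : ∀ m : ℕ, 0 < ε * (1 / 2) ^ m := fun m => by positivity
  -- Starting from `d j`, each step moves at most `infDist + ε/2ᵐ` and lands within `ε/2ᵐ⁺¹`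
  -- of `F ω`, so the steps are geometrically small and the limit lies in `F ω`.
  choose next hnext_meas hnext using fun (u : {u : Ω → ℕ // Measurable u}) (m : ℕ) =>
    exists_measurable_index_close_to_set hFne hd hF u.2 (hη m) (hη (m + 1))
  let idx : ℕ → {u : Ω → ℕ // Measurable u} := fun m =>
    Nat.rec ⟨fun _ => j, measurable_const⟩ (fun m u => ⟨next u m, hnext_meas u m⟩) m
  let x : Ω → ℕ → Y := fun ω m => d ((idx m).1 ω)
  have hx_succ : ∀ ω m, dist (x ω (m + 1)) (x ω m) < infDist (x ω m) (F ω) + ε * (1 / 2) ^ m ∧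
      infDist (x ω (m + 1)) (F ω) < ε * (1 / 2) ^ (m + 1) := fun ω m => hnext (idx m) m ω
  have hx_dist : ∀ ω m,
      dist (x ω m) (x ω (m + 1)) ≤ (infDist (d j) (F ω) + 2 * ε) * (1 / 2) ^ m := by
    intro ω m
    rw [dist_comm]
    rcases m with _ | m
    · have h : dist (x ω 1) (d j) < infDist (d j) (F ω) + ε * (1 / 2) ^ 0 := (hx_succ ω 0).1
      change dist (x ω 1) (d j) ≤ _
      rw [pow_zero] at h ⊢
      linarith
    · have h1 := (hx_succ ω (m + 1)).1
      have h2 := (hx_succ ω m).2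
      have h3 : 0 ≤ infDist (d j) (F ω) * (1 / 2) ^ (m + 1) :=
        mul_nonneg infDist_nonneg (by positivity)
      linarith
  have hcauchy : ∀ ω, CauchySeq (x ω) := fun ω =>
    cauchySeq_of_le_geometric _ _ (by norm_num) (hx_dist ω)
  have hlim : ∀ ω, Tendsto (x ω) atTop (𝓝 (limUnder atTop (x ω))) := fun ω =>
    (hcauchy ω).tendsto_limUnder
  refine ⟨fun ω => limUnder atTop (x ω), ?_, fun ω => ?_, fun ω => ?_⟩
  · exact measurable_of_tendsto_metrizable (fun m => measurable_from_nat.comp (idx m).2)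
      (tendsto_pi_nhds.2 hlim)
  · have hinf_zero : Tendsto (fun m => infDist (x ω (m + 1)) (F ω)) atTop (𝓝 0) := by
      refine squeeze_zero (fun _ => infDist_nonneg) (fun m => (hx_succ ω m).2.le) ?_
      simpa using ((tendsto_pow_atTop_nhds_zero_of_lt_one (by norm_num : (0 : ℝ) ≤ 1 / 2)
        (by norm_num)).comp (tendsto_add_atTop_nat 1)).const_mul ε
    have hinf_lim : Tendsto (fun m => infDist (x ω (m + 1)) (F ω)) atTop
        (𝓝 (infDist (limUnder atTop (x ω)) (F ω))) :=
      ((continuous_infDist_pt (F ω)).tendsto _).comp ((hlim ω).comp (tendsto_add_atTop_nat 1))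
    exact ((hFcl ω).mem_iff_infDist_zero (hFne ω)).2 (tendsto_nhds_unique hinf_lim hinf_zero)
  · have := dist_le_of_le_geometric_of_tendsto₀ _ _ (by norm_num) (hx_dist ω) (hlim ω)
    calc dist (d j) (limUnder atTop (x ω)) ≤ (infDist (d j) (F ω) + 2 * ε) / (1 - 1 / 2) := this
      _ = 2 * (infDist (d j) (F ω) + 2 * ε) := by ring

theorem exists_castaing_representation [CompleteSpace Y] [MeasurableSpace Y] [BorelSpace Y]
    {F : Ω → Set Y} (hFcl : ∀ ω, IsClosed (F ω)) (hFne : ∀ ω, (F ω).Nonempty)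
    {d : ℕ → Y} (hd : DenseRange d) (hF : ∀ i, Measurable fun ω => infDist (d i) (F ω)) :
    ∃ σ : ℕ → Ω → Y, (∀ k, Measurable (σ k)) ∧
      ∀ ω, range (fun k => σ k ω) ⊆ F ω ∧ F ω ⊆ closure (range fun k => σ k ω) := by
  choose σ hσ_meas hσ_mem hσ_dist using fun p : ℕ × ℕ =>
    exists_measurable_selection_near hFcl hFne hd hF p.1 (Nat.one_div_pos_of_nat (n := p.2))
  refine ⟨fun k => σ k.unpair, fun k => hσ_meas _,
    fun ω => ⟨range_subset_iff.2 fun k => hσ_mem _ ω, fun y hy => ?_⟩⟩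
  refine Metric.mem_closure_iff.2 fun ε hε => ?_
  obtain ⟨c, hc⟩ := exists_nat_one_div_lt (by positivity : 0 < ε / 8)
  obtain ⟨j, hj⟩ := hd.exists_dist_lt y (by positivity : 0 < ε / 6)
  refine ⟨_, ⟨Nat.pair j c, rfl⟩, ?_⟩
  simp only [Nat.unpair_pair]
  linarith [dist_triangle y (d j) (σ (j, c) ω), dist_comm y (d j), hσ_dist (j, c) ω,
    infDist_le_dist_of_mem (x := d j) hy]

theorem measurable_infEDist_image [CompleteSpace Y] [MeasurableSpace Y] [BorelSpace Y]
    {Z : Type*} [PseudoEMetricSpace Z] [MeasurableSpace Z] [OpensMeasurableSpace Z]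
    {F : Ω → Set Y} (hFcl : ∀ ω, IsClosed (F ω)) (hFne : ∀ ω, (F ω).Nonempty)
    {d : ℕ → Y} (hd : DenseRange d) (hF : ∀ i, Measurable fun ω => infDist (d i) (F ω))
    {g : Ω → Y → Z} (hg : Measurable (Function.uncurry g)) (hg_cont : ∀ ω, Continuous (g ω))
    (z : Z) : Measurable fun ω => infEDist z (g ω '' F ω) := by
  obtain ⟨σ, hσ_meas, hσ⟩ := exists_castaing_representation hFcl hFne hd hF
  simp_rw [fun ω => infEDist_image_eq_iInf (hg_cont ω) (hσ ω).1 (hσ ω).2 z]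
  exact .iInf fun k => measurable_edist_right.comp (hg.comp (measurable_id.prodMk (hσ_meas k)))

theorem exists_ae_eq_measurable_infDist {μ : Measure Ω} {F : Ω → Set Y}
    (hFcl : ∀ ω, IsClosed (F ω)) (hFne : ∀ ω, (F ω).Nonempty) {d : ℕ → Y}
    (hF : ∀ i, NullMeasurable (fun ω => infDist (d i) (F ω)) μ) :
    ∃ G : Ω → Set Y, (∀ ω, IsClosed (G ω)) ∧ (∀ ω, (G ω).Nonempty) ∧
      (∀ i, Measurable fun ω => infDist (d i) (G ω)) ∧ G =ᵐ[μ] F := by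
  classical
  set f : ℕ → Ω → ℝ := fun i => (hF i).aemeasurable.mk _
  have hgood : ∀ᵐ ω ∂μ, ∀ i, infDist (d i) (F ω) = f i ω :=
    ae_all_iff.2 fun i => (hF i).aemeasurable.ae_eq_mk
  -- `F` is replaced by `univ` on a measurable null set outside which all `infDist (d i) (F ·)`
  -- agree with their measurable versions.
  set N := toMeasurable μ {ω | ¬ ∀ i, infDist (d i) (F ω) = f i ω}
  have hN_null : μ N = 0 := by rw [measure_toMeasurable]; exact ae_iff.1 hgood
  refine ⟨fun ω => if ω ∈ N then univ else F ω, fun ω => ?_, fun ω => ?_, fun i => ?_, ?_⟩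
  · by_cases hω : ω ∈ N <;> simp [hω, hFcl]
  · by_cases hω : ω ∈ N
    · simpa [hω] using ⟨(hFne ω).some, mem_univ _⟩
    · simpa [hω] using hFne ω
  · have : (fun ω => infDist (d i) (if ω ∈ N then univ else F ω)) =
        N.piecewise (fun _ => 0) (f i) := by
      ext ω
      by_cases hω : ω ∈ N
      · simp [hω, infDist_zero_of_mem (mem_univ (d i))]
      · have := not_not.1 (fun h => hω (subset_toMeasurable μ _ h))
        simp [hω, this i]
    rw [this]
    exact (measurable_const.piecewise (measurableSet_toMeasurable μ _)
      (hF i).aemeasurable.measurable_mk)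
  · filter_upwards [measure_eq_zero_iff_ae_notMem.1 hN_null] with ω hω
    simp [hω]

theorem aemeasurable_infEDist_image [CompleteSpace Y] [SecondCountableTopology Y]
    [MeasurableSpace Y] [BorelSpace Y]
    {Z : Type*} [PseudoEMetricSpace Z] [MeasurableSpace Z] [OpensMeasurableSpace Z]
    {μ : Measure Ω} {F : Ω → Set Y} (hFcl : ∀ ω, IsClosed (F ω)) (hFne : ∀ ω, (F ω).Nonempty)
    (hF : ∀ y, NullMeasurable (fun ω => infDist y (F ω)) μ)
    {g : Ω → Y → Z} (hg : Measurable (Function.uncurry g)) (hg_cont : ∀ ω, Continuous (g ω))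
    (z : Z) : AEMeasurable (fun ω => infEDist z (g ω '' F ω)) μ := by
  rcases isEmpty_or_nonempty Ω with hΩ | ⟨⟨ω₀⟩⟩
  · exact Subsingleton.measurable.aemeasurable
  have : Nonempty Y := (hFne ω₀).to_subtype.map Subtype.val
  obtain ⟨d, hd⟩ := TopologicalSpace.exists_dense_seq Y
  obtain ⟨G, hGcl, hGne, hG, hGF⟩ := exists_ae_eq_measurable_infDist hFcl hFne fun i => hF (d i)
  exact ⟨_, measurable_infEDist_image hGcl hGne hd hG hg hg_cont z,
    hGF.mono fun ω hω => by simp only [hω]⟩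

end CastaingRepresentation

namespace RDS

variable {Ω₁ Ω₂ X : Type*}

theorem IsGroupAction.apply_apply_of_add_eq {α : Type*} {θ : ℝ → α → α} (hθ : IsGroupAction θ)
    {s t u : ℝ} (h : s + t = u) (a : α) : θ t (θ s a) = θ u a :=
  h ▸ (hθ.2 s t a).symm

theorem IsGroupAction.apply_neg_apply {α : Type*} {θ : ℝ → α → α} (hθ : IsGroupAction θ)
    (t : ℝ) (a : α) : θ t (θ (-t) a) = a := by
  rw [hθ.apply_apply_of_add_eq (neg_add_cancel t), hθ.1]

section HausSemidist

variable [MetricSpace X] {C B : Set X}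

theorem infEDist_le_hausSemidist_of_mem {x : X} (hx : x ∈ C) : infEDist x B ≤ hausSemidist C B :=
  le_iSup₂ (f := fun y (_ : y ∈ C) => infEDist y B) x hx

theorem lt_hausSemidist_iff {r : ℝ≥0∞} : r < hausSemidist C B ↔ ∃ x ∈ C, r < infEDist x B :=
  lt_biSup_iff

theorem infEDist_le_infEDist_add_hausSemidist (x : X) (C B : Set X) :
    infEDist x B ≤ infEDist x C + hausSemidist C B := by
  rw [← tsub_le_iff_right]
  refine le_infEDist.2 fun y hy => tsub_le_iff_right.2 ?_
  calc infEDist x B ≤ infEDist y B + edist x y := infEDist_le_infEDist_add_edist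
    _ ≤ hausSemidist C B + edist x y := by gcongr; exact infEDist_le_hausSemidist_of_mem hy
    _ = edist x y + hausSemidist C B := add_comm _ _

theorem tendsto_infEDist_of_tendsto_hausSemidist {ι : Type*} {l : Filter ι} {S : ι → Set X}
    {A : Set X} (hAS : ∀ i, A ⊆ S i) (hS : Tendsto (fun i => hausSemidist (S i) A) l (𝓝 0))
    (x : X) : Tendsto (fun i => infEDist x (S i)) l (𝓝 (infEDist x A)) := by
  have hlower : Tendsto (fun i => infEDist x A - hausSemidist (S i) A) l (𝓝 (infEDist x A)) := by
    simpa using ENNReal.Tendsto.sub tendsto_const_nhds hS (Or.inr ENNReal.zero_ne_top)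
  exact tendsto_of_tendsto_of_tendsto_of_le_of_le hlower tendsto_const_nhds
    (fun i => tsub_le_iff_right.2 (infEDist_le_infEDist_add_hausSemidist x _ _))
    (fun i => infEDist_anti (hAS i))

theorem subset_closure_of_hausSemidist_eq_zero (h : hausSemidist C B = 0) : C ⊆ closure B :=
  fun _ hx => mem_closure_iff_infEDist_zero.2
    (nonpos_iff_eq_zero.1 (h ▸ infEDist_le_hausSemidist_of_mem hx))

end HausSemidist

section OmegaLimit

variable {θ₁ : ℝ → Ω₁ → Ω₁} {θ₂ : ℝ → Ω₂ → Ω₂} {Φ : ℝ → Ω₁ → Ω₂ → X → X}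
  {𝒟 : Set (Ω₁ → Ω₂ → Set X)} {A B K : Ω₁ → Ω₂ → Set X} {ω₁ : Ω₁} {ω₂ : Ω₂}

def pullbackImage (θ₁ : ℝ → Ω₁ → Ω₁) (θ₂ : ℝ → Ω₂ → Ω₂) (Φ : ℝ → Ω₁ → Ω₂ → X → X)
    (B : Ω₁ → Ω₂ → Set X) (t : ℝ) (ω₁ : Ω₁) (ω₂ : Ω₂) : Set X :=
  Φ t (θ₁ (-t) ω₁) (θ₂ (-t) ω₂) '' B (θ₁ (-t) ω₁) (θ₂ (-t) ω₂)

theorem Invariant.pullbackImage_eq (hθ₁ : IsGroupAction θ₁) (hθ₂ : IsGroupAction θ₂)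
    (hA : Invariant θ₁ θ₂ Φ A) {t : ℝ} (ht : 0 ≤ t) (ω₁ : Ω₁) (ω₂ : Ω₂) :
    pullbackImage θ₁ θ₂ Φ A t ω₁ ω₂ = A ω₁ ω₂ := by
  rw [pullbackImage, hA t ht, hθ₁.apply_neg_apply, hθ₂.apply_neg_apply]

variable [MetricSpace X]

theorem mem_omegaLimit_iff {y : X} : y ∈ omegaLimit θ₁ θ₂ Φ B ω₁ ω₂ ↔
    ∀ τ, 0 ≤ τ → y ∈ closure (⋃ t ∈ Ici τ, pullbackImage θ₁ θ₂ Φ B t ω₁ ω₂) :=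
  mem_iInter₂

theorem omegaLimit_subset (hK : IsAbsorbingSet θ₁ θ₂ Φ 𝒟 K) (hKcl : IsClosed (K ω₁ ω₂)) :
    omegaLimit θ₁ θ₂ Φ K ω₁ ω₂ ⊆ K ω₁ ω₂ := by
  obtain ⟨T, hT, hTK⟩ := hK.2 ω₁ ω₂ K hK.1
  exact fun y hy => hKcl.closure_subset_iff.2 (iUnion₂_subset fun t ht => hTK t ht)
    (mem_omegaLimit_iff.1 hy T hT.le)

theorem exists_mem_pullbackImage_dist_lt {y : X} (hy : y ∈ omegaLimit θ₁ θ₂ Φ B ω₁ ω₂) {r : ℝ}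
    (hr : 0 ≤ r) {ε : ℝ} (hε : 0 < ε) :
    ∃ t, r ≤ t ∧ ∃ p ∈ pullbackImage θ₁ θ₂ Φ B t ω₁ ω₂, dist p y < ε := by
  obtain ⟨p, hp, hpy⟩ := Metric.mem_closure_iff.1 (mem_omegaLimit_iff.1 hy r hr) ε hε
  obtain ⟨t, ht, hpt⟩ := mem_iUnion₂.1 hp
  exact ⟨t, ht, p, hpt, by rwa [dist_comm]⟩

theorem exists_seq_tendsto_of_mem_omegaLimit {y : X} (hy : y ∈ omegaLimit θ₁ θ₂ Φ B ω₁ ω₂)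
    {r : ℝ} (hr : 0 ≤ r) : ∃ (t : ℕ → ℝ) (p : ℕ → X), (∀ n, r + n ≤ t n) ∧
      (∀ n, p n ∈ pullbackImage θ₁ θ₂ Φ B (t n) ω₁ ω₂) ∧ Tendsto p atTop (𝓝 y) := by
  choose t ht p hp hpy using fun n : ℕ =>
    exists_mem_pullbackImage_dist_lt hy (by positivity : 0 ≤ r + n)
      (Nat.one_div_pos_of_nat (n := n))
  exact ⟨t, p, ht, hp, tendsto_iff_dist_tendsto_zero.2 (squeeze_zero (fun _ => dist_nonneg)
    (fun n => (hpy n).le) tendsto_one_div_add_atTop_nhds_zero_nat)⟩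

theorem Invariant.subset_of_attracts (hθ₁ : IsGroupAction θ₁) (hθ₂ : IsGroupAction θ₂)
    {A' : Ω₁ → Ω₂ → Set X} (hA : Invariant θ₁ θ₂ Φ A) (hA' : IsClosed (A' ω₁ ω₂))
    (hattr : Attracts θ₁ θ₂ Φ A A') : A ω₁ ω₂ ⊆ A' ω₁ ω₂ := by
  have hconst : Tendsto (fun _ : ℝ => hausSemidist (A ω₁ ω₂) (A' ω₁ ω₂)) atTop (𝓝 0) :=
    (hattr ω₁ ω₂).congr' <| (eventually_ge_atTop 0).mono fun t ht => by
      show hausSemidist (pullbackImage θ₁ θ₂ Φ A t ω₁ ω₂) _ = _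
      rw [hA.pullbackImage_eq hθ₁ hθ₂ ht]
  exact hA'.closure_eq ▸ subset_closure_of_hausSemidist_eq_zero
    (tendsto_nhds_unique tendsto_const_nhds hconst)

theorem IsPullbackAttractor.eq [MeasurableSpace Ω₂] (hθ₁ : IsGroupAction θ₁)
    (hθ₂ : IsGroupAction θ₂) {P : Measure Ω₂} {A' : Ω₁ → Ω₂ → Set X}
    (hA : IsPullbackAttractor θ₁ θ₂ Φ P 𝒟 A) (hA' : IsPullbackAttractor θ₁ θ₂ Φ P 𝒟 A') :
    A = A' :=
  funext₂ fun _ _ =>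
    (hA.invariant.subset_of_attracts hθ₁ hθ₂ (hA'.compact _ _).isClosed
      (hA'.attracts A hA.mem)).antisymm
    (hA'.invariant.subset_of_attracts hθ₁ hθ₂ (hA.compact _ _).isClosed
      (hA.attracts A' hA'.mem))

variable [MeasurableSpace X] [MeasurableSpace Ω₂]

theorem IsCocycle.pullbackImage_add (hθ₁ : IsGroupAction θ₁) (hθ₂ : IsGroupAction θ₂)
    (hΦ : IsCocycle θ₁ θ₂ Φ) {r t : ℝ} (hr : 0 ≤ r) (ht : 0 ≤ t) (ω₁ : Ω₁) (ω₂ : Ω₂) :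
    pullbackImage θ₁ θ₂ Φ B (r + t) (θ₁ t ω₁) (θ₂ t ω₂) =
      Φ t ω₁ ω₂ '' pullbackImage θ₁ θ₂ Φ B r ω₁ ω₂ := by
  have h₁ := hθ₁.apply_apply_of_add_eq (s := t) (t := -(r + t)) (u := -r) (by ring) ω₁
  have h₂ := hθ₂.apply_apply_of_add_eq (s := t) (t := -(r + t)) (u := -r) (by ring) ω₂
  rw [pullbackImage, pullbackImage, h₁, h₂, image_image]
  refine image_congr fun x _ => ?_
  rw [add_comm, hΦ.cocycle t r ht hr, hθ₁.apply_neg_apply, hθ₂.apply_neg_apply]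

theorem IsAbsorbingSet.eventually_pullbackImage_subset (hθ₁ : IsGroupAction θ₁)
    (hθ₂ : IsGroupAction θ₂) (hΦ : IsCocycle θ₁ θ₂ Φ) (hK : IsAbsorbingSet θ₁ θ₂ Φ 𝒟 K)
    (hB : B ∈ 𝒟) {τ : ℝ} (hτ : 0 ≤ τ) (ω₁ : Ω₁) (ω₂ : Ω₂) :
    ∀ᶠ t in atTop, pullbackImage θ₁ θ₂ Φ B t ω₁ ω₂ ⊆ pullbackImage θ₁ θ₂ Φ K τ ω₁ ω₂ := by
  obtain ⟨T, hT, hTK⟩ := hK.2 (θ₁ (-τ) ω₁) (θ₂ (-τ) ω₂) B hB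
  filter_upwards [eventually_ge_atTop (T + τ)] with t ht
  have h := hΦ.pullbackImage_add (B := B) hθ₁ hθ₂ (by linarith : 0 ≤ t - τ) hτ
    (θ₁ (-τ) ω₁) (θ₂ (-τ) ω₂)
  rw [sub_add_cancel, hθ₁.apply_neg_apply, hθ₂.apply_neg_apply] at h
  exact h ▸ image_mono (hTK (t - τ) (by linarith))

theorem mem_omegaLimit_of_tendsto (hθ₁ : IsGroupAction θ₁) (hθ₂ : IsGroupAction θ₂)
    (hΦ : IsCocycle θ₁ θ₂ Φ) (hK : IsAbsorbingSet θ₁ θ₂ Φ 𝒟 K) (hB : B ∈ 𝒟) {ι : Type*}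
    {l : Filter ι} [l.NeBot] {t : ι → ℝ} {p : ι → X} (ht : Tendsto t l atTop)
    (hp : ∀ i, p i ∈ pullbackImage θ₁ θ₂ Φ B (t i) ω₁ ω₂) {y : X} (hpy : Tendsto p l (𝓝 y)) :
    y ∈ omegaLimit θ₁ θ₂ Φ K ω₁ ω₂ :=
  mem_omegaLimit_iff.2 fun _ hτ => mem_closure_of_tendsto hpy <|
    (ht.eventually (hK.eventually_pullbackImage_subset hθ₁ hθ₂ hΦ hB hτ ω₁ ω₂)).mono
      fun i hi => mem_biUnion self_mem_Ici (hi (hp i))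

theorem AsymptoticallyCompact.exists_subseq_tendsto_mem_omegaLimit
    (hac : AsymptoticallyCompact θ₁ θ₂ Φ 𝒟) (hθ₁ : IsGroupAction θ₁) (hθ₂ : IsGroupAction θ₂)
    (hΦ : IsCocycle θ₁ θ₂ Φ) (hK : IsAbsorbingSet θ₁ θ₂ Φ 𝒟 K) (hB : B ∈ 𝒟) {t : ℕ → ℝ}
    {p : ℕ → X} (ht : Tendsto t atTop atTop)
    (hp : ∀ n, p n ∈ pullbackImage θ₁ θ₂ Φ B (t n) ω₁ ω₂) :
    ∃ φ : ℕ → ℕ, StrictMono φ ∧ ∃ y ∈ omegaLimit θ₁ θ₂ Φ K ω₁ ω₂, Tendsto (p ∘ φ) atTop (𝓝 y) := by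
  choose x hx hxp using hp
  obtain ⟨φ, y, hφ, hy⟩ := hac ω₁ ω₂ B hB t x ht hx
  simp only [hxp] at hy
  exact ⟨φ, hφ, y, mem_omegaLimit_of_tendsto hθ₁ hθ₂ hΦ hK hB (ht.comp hφ.tendsto_atTop)
    (fun n => ⟨x (φ n), hx (φ n), hxp (φ n)⟩) hy, hy⟩

theorem omegaLimit_nonempty (hac : AsymptoticallyCompact θ₁ θ₂ Φ 𝒟) (hθ₁ : IsGroupAction θ₁)
    (hθ₂ : IsGroupAction θ₂) (hΦ : IsCocycle θ₁ θ₂ Φ) (hK : IsAbsorbingSet θ₁ θ₂ Φ 𝒟 K)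
    (hKne : ∀ ω₁ ω₂, (K ω₁ ω₂).Nonempty) (ω₁ : Ω₁) (ω₂ : Ω₂) :
    (omegaLimit θ₁ θ₂ Φ K ω₁ ω₂).Nonempty := by
  choose p hp using fun n : ℕ =>
    (hKne (θ₁ (-n) ω₁) (θ₂ (-n) ω₂)).image (Φ n (θ₁ (-n) ω₁) (θ₂ (-n) ω₂))
  obtain ⟨-, -, y, hy, -⟩ := hac.exists_subseq_tendsto_mem_omegaLimit hθ₁ hθ₂ hΦ hK hK.1
    tendsto_natCast_atTop_atTop hp
  exact ⟨y, hy⟩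

theorem isCompact_omegaLimit (hac : AsymptoticallyCompact θ₁ θ₂ Φ 𝒟) (hθ₁ : IsGroupAction θ₁)
    (hθ₂ : IsGroupAction θ₂) (hΦ : IsCocycle θ₁ θ₂ Φ) (hK : IsAbsorbingSet θ₁ θ₂ Φ 𝒟 K)
    (ω₁ : Ω₁) (ω₂ : Ω₂) : IsCompact (omegaLimit θ₁ θ₂ Φ K ω₁ ω₂) := by
  refine IsSeqCompact.isCompact fun u hu => ?_
  choose t ht p hp hpu using fun n : ℕ =>
    exists_mem_pullbackImage_dist_lt (hu n) n.cast_nonneg (Nat.one_div_pos_of_nat (n := n))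
  obtain ⟨φ, hφ, y, hy, hpy⟩ := hac.exists_subseq_tendsto_mem_omegaLimit hθ₁ hθ₂ hΦ hK hK.1
    (tendsto_atTop_mono ht tendsto_natCast_atTop_atTop) hp
  exact ⟨y, hy, φ, hφ, hpy.congr_dist (squeeze_zero (fun _ => dist_nonneg)
    (fun n => (hpu (φ n)).le) (tendsto_one_div_add_atTop_nhds_zero_nat.comp hφ.tendsto_atTop))⟩

theorem attracts_omegaLimit (hac : AsymptoticallyCompact θ₁ θ₂ Φ 𝒟) (hθ₁ : IsGroupAction θ₁)
    (hθ₂ : IsGroupAction θ₂) (hΦ : IsCocycle θ₁ θ₂ Φ) (hK : IsAbsorbingSet θ₁ θ₂ Φ 𝒟 K)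
    (hB : B ∈ 𝒟) : Attracts θ₁ θ₂ Φ B (omegaLimit θ₁ θ₂ Φ K) := by
  intro ω₁ ω₂
  refine ENNReal.tendsto_nhds_zero.2 fun ε hε => ?_
  by_contra hfreq
  choose t ht hεt using fun n : ℕ => frequently_atTop.1 (not_eventually.1 hfreq) n
  choose p hp hεp using fun n => lt_hausSemidist_iff.1 (not_le.1 (hεt n))
  obtain ⟨φ, -, y, hy, hpy⟩ := hac.exists_subseq_tendsto_mem_omegaLimit hθ₁ hθ₂ hΦ hK hB
    (tendsto_atTop_mono ht tendsto_natCast_atTop_atTop) hp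
  have hlim : Tendsto (fun n => infEDist (p (φ n)) (omegaLimit θ₁ θ₂ Φ K ω₁ ω₂)) atTop (𝓝 0) :=
    infEDist_zero_of_mem hy ▸ (continuous_infEDist.tendsto y).comp hpy
  exact (ge_of_tendsto hlim (.of_forall fun n => (hεp (φ n)).le)).not_gt hε

theorem image_omegaLimit_subset (hθ₁ : IsGroupAction θ₁) (hθ₂ : IsGroupAction θ₂)
    (hΦ : IsCocycle θ₁ θ₂ Φ) {t : ℝ} (ht : 0 ≤ t) (ω₁ : Ω₁) (ω₂ : Ω₂) :
    Φ t ω₁ ω₂ '' omegaLimit θ₁ θ₂ Φ B ω₁ ω₂ ⊆ omegaLimit θ₁ θ₂ Φ B (θ₁ t ω₁) (θ₂ t ω₂) := by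
  rintro _ ⟨y, hy, rfl⟩
  refine mem_omegaLimit_iff.2 fun τ hτ => map_mem_closure (hΦ.continuous t ht ω₁ ω₂)
    (mem_omegaLimit_iff.1 hy τ hτ) fun z hz => ?_
  obtain ⟨r, hr, hz⟩ := mem_iUnion₂.1 hz
  refine mem_iUnion₂.2 ⟨r + t, le_add_of_le_of_nonneg hr ht, ?_⟩
  rw [hΦ.pullbackImage_add hθ₁ hθ₂ (hτ.trans hr) ht]
  exact mem_image_of_mem _ hz

theorem omegaLimit_subset_image (hac : AsymptoticallyCompact θ₁ θ₂ Φ 𝒟) (hθ₁ : IsGroupAction θ₁)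
    (hθ₂ : IsGroupAction θ₂) (hΦ : IsCocycle θ₁ θ₂ Φ) (hK : IsAbsorbingSet θ₁ θ₂ Φ 𝒟 K)
    {t : ℝ} (ht : 0 ≤ t) (ω₁ : Ω₁) (ω₂ : Ω₂) :
    omegaLimit θ₁ θ₂ Φ K (θ₁ t ω₁) (θ₂ t ω₂) ⊆ Φ t ω₁ ω₂ '' omegaLimit θ₁ θ₂ Φ K ω₁ ω₂ := by
  intro z hz
  obtain ⟨s, p, hs, hp, hpz⟩ := exists_seq_tendsto_of_mem_omegaLimit hz ht
  have hs' : ∀ n : ℕ, (n : ℝ) ≤ s n - t := fun n => by linarith [hs n]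
  have hp' : ∀ n, p n ∈ Φ t ω₁ ω₂ '' pullbackImage θ₁ θ₂ Φ K (s n - t) ω₁ ω₂ := fun n => by
    rw [← hΦ.pullbackImage_add hθ₁ hθ₂ ((Nat.cast_nonneg n).trans (hs' n)) ht, sub_add_cancel]
    exact hp n
  choose w hw hwp using hp'
  obtain ⟨φ, hφ, y, hy, hwy⟩ := hac.exists_subseq_tendsto_mem_omegaLimit hθ₁ hθ₂ hΦ hK hK.1
    (tendsto_atTop_mono hs' tendsto_natCast_atTop_atTop) hw
  refine ⟨y, hy, tendsto_nhds_unique (((hΦ.continuous t ht ω₁ ω₂).tendsto y).comp hwy) ?_⟩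
  simpa only [Function.comp_def, hwp] using hpz.comp hφ.tendsto_atTop

theorem invariant_omegaLimit (hac : AsymptoticallyCompact θ₁ θ₂ Φ 𝒟) (hθ₁ : IsGroupAction θ₁)
    (hθ₂ : IsGroupAction θ₂) (hΦ : IsCocycle θ₁ θ₂ Φ) (hK : IsAbsorbingSet θ₁ θ₂ Φ 𝒟 K) :
    Invariant θ₁ θ₂ Φ (omegaLimit θ₁ θ₂ Φ K) := fun _ ht ω₁ ω₂ =>
  (image_omegaLimit_subset hθ₁ hθ₂ hΦ ht ω₁ ω₂).antisymm
    (omegaLimit_subset_image hac hθ₁ hθ₂ hΦ hK ht ω₁ ω₂)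

theorem nullMeasurable_infDist_omegaLimit [CompleteSpace X] [SecondCountableTopology X]
    [BorelSpace X] {P : Measure Ω₂} (hθ₂P : ∀ t, MeasurePreserving (θ₂ t) P P)
    (hac : AsymptoticallyCompact θ₁ θ₂ Φ 𝒟) (hθ₁ : IsGroupAction θ₁) (hθ₂ : IsGroupAction θ₂)
    (hΦ : IsCocycle θ₁ θ₂ Φ) (hK : IsClosedMeasurableAbsorbingSet θ₁ θ₂ Φ P 𝒟 K)
    (ω₁ : Ω₁) (x : X) : NullMeasurable (fun ω₂ => infDist x (omegaLimit θ₁ θ₂ Φ K ω₁ ω₂)) P := by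
  obtain ⟨hKabs, hKcl, hKmeas⟩ := hK
  have hterm : ∀ n : ℕ,
      AEMeasurable (fun ω₂ => infEDist x (pullbackImage θ₁ θ₂ Φ K n ω₁ ω₂)) P := by
    intro n
    have hΦn : Measurable (Function.uncurry (Φ n (θ₁ (-n) ω₁))) :=
      (hΦ.measurable _).comp
        ((measurable_const (a := (⟨n, n.cast_nonneg⟩ : {t : ℝ // 0 ≤ t}))).prodMk measurable_id)
    exact (aemeasurable_infEDist_image (fun _ => (hKcl _ _).1) (fun _ => (hKcl _ _).2)
      (hKmeas _) hΦn (hΦ.continuous n n.cast_nonneg _) x).comp_quasiMeasurePreserving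
      (hθ₂P (-n)).quasiMeasurePreserving
  have hlim : ∀ ω₂, Tendsto (fun n : ℕ => infEDist x (pullbackImage θ₁ θ₂ Φ K n ω₁ ω₂)) atTop
      (𝓝 (infEDist x (omegaLimit θ₁ θ₂ Φ K ω₁ ω₂))) := fun ω₂ => by
    refine tendsto_infEDist_of_tendsto_hausSemidist (fun n => ?_)
      ((attracts_omegaLimit hac hθ₁ hθ₂ hΦ hKabs hKabs.1 ω₁ ω₂).comp tendsto_natCast_atTop_atTop) x
    rw [← (invariant_omegaLimit hac hθ₁ hθ₂ hΦ hKabs).pullbackImage_eq hθ₁ hθ₂ n.cast_nonneg]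
    exact image_mono (omegaLimit_subset hKabs (hKcl _ _).1)
  exact (aemeasurable_of_tendsto_metrizable_ae' hterm
    (.of_forall hlim)).ennreal_toReal.nullMeasurable

end OmegaLimit

theorem exists_unique_attractor_of_absorbing_general
    {Ω₁ Ω₂ X : Type*}
    [MetricSpace X] [CompleteSpace X] [SecondCountableTopology X]
    [MeasurableSpace X] [BorelSpace X]
    [MeasurableSpace Ω₂] (P : Measure Ω₂)
    (θ₁ : ℝ → Ω₁ → Ω₁) (θ₂ : ℝ → Ω₂ → Ω₂)
    (hθ₁ : IsGroupAction θ₁) (hθ₂ : IsGroupAction θ₂)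
    (hθ₂pres : ∀ t : ℝ, MeasurePreserving (θ₂ t) P P)
    (Φ : ℝ → Ω₁ → Ω₂ → X → X)
    (hΦ : IsCocycle θ₁ θ₂ Φ)
    (𝒟 : Set (Ω₁ → Ω₂ → Set X))
    (h𝒟ic : InclusionClosed 𝒟)
    (K : Ω₁ → Ω₂ → Set X)
    (hK : IsClosedMeasurableAbsorbingSet θ₁ θ₂ Φ P 𝒟 K)
    (hac : AsymptoticallyCompact θ₁ θ₂ Φ 𝒟) :
    IsPullbackAttractor θ₁ θ₂ Φ P 𝒟 (fun ω₁ ω₂ => omegaLimit θ₁ θ₂ Φ K ω₁ ω₂) ∧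
      ∀ A : Ω₁ → Ω₂ → Set X, IsPullbackAttractor θ₁ θ₂ Φ P 𝒟 A →
        A = fun ω₁ ω₂ => omegaLimit θ₁ θ₂ Φ K ω₁ ω₂ := by
  have ⟨hKabs, hKcl, _⟩ := hK
  have hattr : IsPullbackAttractor θ₁ θ₂ Φ P 𝒟 (omegaLimit θ₁ θ₂ Φ K) :=
    { mem := h𝒟ic K hKabs.1 _ fun ω₁ ω₂ =>
        ⟨omegaLimit_nonempty hac hθ₁ hθ₂ hΦ hKabs (fun _ _ => (hKcl _ _).2) ω₁ ω₂,
          omegaLimit_subset hKabs (hKcl ω₁ ω₂).1⟩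
      compact := isCompact_omegaLimit hac hθ₁ hθ₂ hΦ hKabs
      measurable := nullMeasurable_infDist_omegaLimit hθ₂pres hac hθ₁ hθ₂ hΦ hK
      invariant := invariant_omegaLimit hac hθ₁ hθ₂ hΦ hKabs
      attracts := fun _ hB => attracts_omegaLimit hac hθ₁ hθ₂ hΦ hKabs hB }
  exact ⟨hattr, fun A hA => hA.eq hθ₁ hθ₂ hattr⟩

theorem exists_unique_attractor_of_absorbing
    {Ω₁ Ω₂ X : Type*} [Nonempty Ω₁]
    [MetricSpace X] [CompleteSpace X] [SecondCountableTopology X]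
    [MeasurableSpace X] [BorelSpace X]
    [MeasurableSpace Ω₂] (P : Measure Ω₂) [IsProbabilityMeasure P]
    (θ₁ : ℝ → Ω₁ → Ω₁) (θ₂ : ℝ → Ω₂ → Ω₂)
    (hθ₁ : IsGroupAction θ₁) (hθ₂ : IsGroupAction θ₂)
    (hθ₂meas : Measurable fun p : ℝ × Ω₂ => θ₂ p.1 p.2)
    (hθ₂pres : ∀ t : ℝ, MeasurePreserving (θ₂ t) P P)
    (Φ : ℝ → Ω₁ → Ω₂ → X → X)
    (hΦ : IsCocycle θ₁ θ₂ Φ)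
    (𝒟 : Set (Ω₁ → Ω₂ → Set X))
    (h𝒟ne : FamiliesOfNonemptySets 𝒟)
    (h𝒟ic : InclusionClosed 𝒟)
    (K : Ω₁ → Ω₂ → Set X)
    (hK : IsClosedMeasurableAbsorbingSet θ₁ θ₂ Φ P 𝒟 K)
    (hac : AsymptoticallyCompact θ₁ θ₂ Φ 𝒟) :
    IsPullbackAttractor θ₁ θ₂ Φ P 𝒟 (fun ω₁ ω₂ => omegaLimit θ₁ θ₂ Φ K ω₁ ω₂) ∧
      ∀ A : Ω₁ → Ω₂ → Set X, IsPullbackAttractor θ₁ θ₂ Φ P 𝒟 A →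
        A = fun ω₁ ω₂ => omegaLimit θ₁ θ₂ Φ K ω₁ ω₂ :=
  exists_unique_attractor_of_absorbing_general P θ₁ θ₂ hθ₁ hθ₂ hθ₂pres Φ hΦ 𝒟 h𝒟ic K hK hac

end RDS
end
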